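/- For a connected simple graph G on n vertices, q_1(G) ≤ max over vertices u of ( d(u) + (1/d(u)) Σ_{v ~ u} d(v) ), where the sum is over neighbors v of u. -/

import Mathlib

open Matrix

/-- The signless Laplacian matrix `Q(G) = D(G) + A(G)` of a simple graph. -/
noncomputable def signlessLaplacian {V : Type*} [Fintype V] [DecidableEq V]
    (G : SimpleGraph V) : Matrix V V ℝ :=
  letI := Classical.decRel G.Adj
  Matrix.diagonal (fun v => (G.degree v : ℝ)) + G.adjMatrix ℝ

/-- The multiset of eigenvalues (with multiplicity) of a real symmetric matrix. -/
noncomputable def eigMultiset {V : Type*} [Fintype V] [DecidableEq V]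
    (A : Matrix V V ℝ) : Multiset ℝ :=
  if h : A.IsHermitian then Finset.univ.val.map h.eigenvalues else 0

/-- The `k`-th largest eigenvalue (1-indexed) of a real symmetric matrix. -/
noncomputable def kthEig {V : Type*} [Fintype V] [DecidableEq V]
    (A : Matrix V V ℝ) (k : ℕ) : ℝ :=
  ((eigMultiset A).sort (· ≥ ·)).getD (k - 1) 0

/-- Degree of a vertex, with classical decidability of adjacency. -/
noncomputable def gdeg {V : Type*} [Fintype V] (G : SimpleGraph V) (v : V) : ℕ :=
  letI := Classical.decRel G.Adj
  G.degree v

/-- The `k`-th largest degree (1-indexed, with multiplicity) of a graph. -/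
noncomputable def kthLargestDegree {V : Type*} [Fintype V] (G : SimpleGraph V) (k : ℕ) : ℕ :=
  ((Finset.univ.val.map (gdeg G)).sort (· ≥ ·)).getD (k - 1) 0

noncomputable def nbrDegSum {V : Type*} [Fintype V] (G : SimpleGraph V) (u : V) : ℝ :=
  letI := Classical.decRel G.Adj
  ∑ v ∈ G.neighborFinset u, (G.degree v : ℝ)

/-!
Let `Q x = μ x` with `x ≠ 0` and pick a vertex `u` maximising `|x v| / d(v)`. Taking absolute
values in the eigen-equation at `u` and bounding each `|x v|` by `d(v) · |x u| / d(u)` gives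
`μ d(u) ≤ d(u)² + Σ_{v ~ u} d(v)`. A vertex of degree `0` carrying a nonzero entry of `x` forces
`μ ≤ 0` instead.
-/

namespace Matrix.IsHermitian

variable {V : Type*} [Fintype V] [DecidableEq V] {A : Matrix V V ℝ}

theorem exists_kthEig_eq (hA : A.IsHermitian) {k : ℕ} (hk₀ : 1 ≤ k)
    (hk : k ≤ Fintype.card V) : ∃ i, kthEig A k = hA.eigenvalues i := by
  have hlen : k - 1 < ((eigMultiset A).sort (· ≥ ·)).length := by
    rw [Multiset.length_sort, eigMultiset, dif_pos hA, Multiset.card_map]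
    exact lt_of_lt_of_le (by omega) hk
  have hmem : kthEig A k ∈ eigMultiset A := by
    rw [kthEig, List.getD_eq_getElem _ _ hlen, ← Multiset.mem_sort (· ≥ ·)]
    exact List.getElem_mem hlen
  rw [eigMultiset, dif_pos hA] at hmem
  obtain ⟨i, -, hi⟩ := Multiset.mem_map.1 hmem
  exact ⟨i, hi.symm⟩

end Matrix.IsHermitian

section Degrees

variable {V : Type*} [Fintype V] (G : SimpleGraph V) [DecidableRel G.Adj]

theorem gdeg_eq_degree (v : V) : gdeg G v = G.degree v := by
  unfold gdeg; congr!

theorem nbrDegSum_eq (u : V) :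
    nbrDegSum G u = ∑ v ∈ G.neighborFinset u, (G.degree v : ℝ) := by
  unfold nbrDegSum; congr!

end Degrees

namespace SimpleGraph

variable {V : Type*} [Fintype V] [DecidableEq V] (G : SimpleGraph V) [DecidableRel G.Adj]

theorem signlessLaplacian_eq :
    signlessLaplacian G = diagonal (fun v => (G.degree v : ℝ)) + G.adjMatrix ℝ := by
  unfold signlessLaplacian; congr!

theorem isHermitian_signlessLaplacian : (signlessLaplacian G).IsHermitian := by
  rw [signlessLaplacian_eq]
  exact (isHermitian_diagonal _).add G.isSymm_adjMatrix

theorem signlessLaplacian_mulVec_apply (x : V → ℝ) (u : V) :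
    (signlessLaplacian G *ᵥ x) u = G.degree u * x u + ∑ v ∈ G.neighborFinset u, x v := by
  simp [signlessLaplacian_eq, add_mulVec, mulVec_diagonal, adjMatrix_mulVec_apply]

variable {G} {μ : ℝ} {x : V → ℝ}

theorem mul_abs_le_of_signlessLaplacian_mulVec_eq (hx : signlessLaplacian G *ᵥ x = μ • x)
    (u : V) : μ * |x u| ≤ G.degree u * |x u| + ∑ v ∈ G.neighborFinset u, |x v| :=
  calc μ * |x u| ≤ |μ * x u| := by rw [abs_mul]; gcongr; exact le_abs_self μ
    _ = |G.degree u * x u + ∑ v ∈ G.neighborFinset u, x v| := by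
      rw [← signlessLaplacian_mulVec_apply, hx, Pi.smul_apply, smul_eq_mul]
    _ ≤ G.degree u * |x u| + ∑ v ∈ G.neighborFinset u, |x v| := by
      refine (abs_add_le _ _).trans ?_
      rw [abs_mul, Nat.abs_cast]
      gcongr
      exact Finset.abs_sum_le_sum_abs _ _

theorem nonpos_of_signlessLaplacian_mulVec_eq (hx : signlessLaplacian G *ᵥ x = μ • x) {w : V}
    (hw : G.degree w = 0) (hxw : x w ≠ 0) : μ ≤ 0 := by
  have hN : G.neighborFinset w = ∅ :=
    Finset.card_eq_zero.1 (by rw [card_neighborFinset_eq_degree, hw])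
  have h := mul_abs_le_of_signlessLaplacian_mulVec_eq hx w
  rw [hw, hN, Nat.cast_zero, zero_mul, Finset.sum_empty, add_zero] at h
  exact nonpos_of_mul_nonpos_left h (abs_pos.2 hxw)

theorem exists_le_degree_add_sum_degree_div_of_signlessLaplacian_mulVec_eq (hx₀ : x ≠ 0)
    (hx : signlessLaplacian G *ᵥ x = μ • x) :
    ∃ u, μ ≤ G.degree u + 1 / G.degree u * ∑ v ∈ G.neighborFinset u, (G.degree v : ℝ) := by
  by_cases hiso : ∃ w, G.degree w = 0 ∧ x w ≠ 0
  · obtain ⟨w, hw, hxw⟩ := hiso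
    exact ⟨w, (nonpos_of_signlessLaplacian_mulVec_eq hx hw hxw).trans (by positivity)⟩
  push Not at hiso
  set y : V → ℝ := fun v => |x v| / G.degree v
  -- at an isolated vertex both sides vanish, `y v` being the junk value `|x v| / 0 = 0`
  have hxy : ∀ v, |x v| = G.degree v * y v := fun v => by
    by_cases hv : G.degree v = 0
    · simp [hiso v hv, hv]
    · exact (mul_div_cancel₀ _ (Nat.cast_ne_zero.2 hv)).symm
  obtain ⟨w, hw⟩ := Function.ne_iff.1 hx₀
  obtain ⟨u, -, hu⟩ := Finset.exists_max_image Finset.univ y ⟨w, Finset.mem_univ w⟩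
  have hyu : 0 < y u := by
    have : 0 < G.degree w * y w := hxy w ▸ abs_pos.2 hw
    exact (pos_of_mul_pos_right this (Nat.cast_nonneg _)).trans_le (hu w (Finset.mem_univ w))
  have hdu : (0 : ℝ) < G.degree u := by
    by_contra! h
    have : y u = 0 := by simp [y, le_antisymm h (Nat.cast_nonneg _)]
    exact hyu.ne' this
  have key : μ * (G.degree u * y u)
      ≤ G.degree u * (G.degree u * y u) + ∑ v ∈ G.neighborFinset u, G.degree v * y u :=
    calc μ * (G.degree u * y u) = μ * |x u| := by rw [hxy u]
      _ ≤ G.degree u * |x u| + ∑ v ∈ G.neighborFinset u, |x v| :=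
        mul_abs_le_of_signlessLaplacian_mulVec_eq hx u
      _ ≤ _ := by
        rw [hxy u]
        gcongr with v
        rw [hxy v]
        gcongr
        exact hu v (Finset.mem_univ v)
  refine ⟨u, ?_⟩
  rw [← Finset.sum_mul] at key
  rw [one_div_mul_eq_div, ← sub_le_iff_le_add', le_div_iff₀ hdu]
  exact le_of_mul_le_mul_right (by linarith) hyu

end SimpleGraph

theorem stmt17_general {V : Type*} [Fintype V] [DecidableEq V] [Nonempty V]
    (G : SimpleGraph V) :
    kthEig (signlessLaplacian G) 1
      ≤ Finset.univ.sup' Finset.univ_nonempty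
          (fun u => (gdeg G u : ℝ) + (1 / (gdeg G u : ℝ)) * nbrDegSum G u) := by
  classical
  have hQ := G.isHermitian_signlessLaplacian
  obtain ⟨i, hi⟩ := hQ.exists_kthEig_eq le_rfl Fintype.card_pos
  obtain ⟨u, hu⟩ := SimpleGraph.exists_le_degree_add_sum_degree_div_of_signlessLaplacian_mulVec_eq
    (mt (WithLp.ofLp_eq_zero 2).1 (hQ.eigenvectorBasis.orthonormal.ne_zero i))
    (hQ.mulVec_eigenvectorBasis i)
  rw [hi]
  refine hu.trans (le_of_eq_of_le ?_ (Finset.le_sup' _ (Finset.mem_univ u)))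
  simp only [gdeg_eq_degree, nbrDegSum_eq]

theorem stmt17 {V : Type*} [Fintype V] [DecidableEq V] [Nonempty V]
    (G : SimpleGraph V) (hconn : G.Connected) :
    kthEig (signlessLaplacian G) 1
      ≤ Finset.univ.sup' Finset.univ_nonempty
          (fun u => (gdeg G u : ℝ) + (1 / (gdeg G u : ℝ)) * nbrDegSum G u) :=
  stmt17_general G
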